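/- For all real u > 1/√2, the function f(u) = Erf(u) - (1 - exp(-u²))/(u√π) satisfies f(u) ≤ 1 - 1/(2u√π). -/

import Mathlib

/-!
Write `T(u) = ∫_u^∞ exp(-t²) dt`, so that `erf u = 1 - 2 T(u) / √π`; the claim becomes
`exp(-u²) ≤ 1/2 + 2 u T(u)`. Since `-d/dt (exp(-t²) / (4t)) = exp(-t²) (1/2 + 1/(4t²))`, which is at
most `exp(-t²)` exactly when `2t² ≥ 1`, for `u ≥ 1/√2` the tail is at least `exp(-u²) / (4u)`. Hence
`2 u T(u) ≥ exp(-u²) / 2 ≥ exp(-u²) - 1/2`.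
-/

open Real

noncomputable def erf (u : ℝ) : ℝ := (2 / Real.sqrt Real.pi) * ∫ t in (0:ℝ)..u, Real.exp (-t ^ 2)

noncomputable def f (u : ℝ) : ℝ := erf u - (1 - Real.exp (-u ^ 2)) / (u * Real.sqrt Real.pi)

open MeasureTheory Set Filter Topology

lemma integrable_exp_neg_sq : Integrable fun t : ℝ => exp (-t ^ 2) := by
  simpa using integrable_exp_neg_mul_sq one_pos

lemma erf_eq_one_sub_integral_Ioi (u : ℝ) :
    erf u = 1 - 2 / √π * ∫ t in Ioi u, exp (-t ^ 2) := by
  have hgauss : ∫ t in Ioi (0 : ℝ), exp (-t ^ 2) = √π / 2 := by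
    simpa using integral_gaussian_Ioi 1
  have hπ : √π ≠ 0 := (sqrt_pos.2 pi_pos).ne'
  rw [erf, ← intervalIntegral.integral_Ioi_sub_Ioi' integrable_exp_neg_sq.integrableOn
    integrable_exp_neg_sq.integrableOn, hgauss]
  field_simp

lemma hasDerivAt_neg_exp_neg_sq_div {t : ℝ} (ht : t ≠ 0) :
    HasDerivAt (fun s => -(exp (-s ^ 2) / (4 * s)))
      (exp (-t ^ 2) * (1 / 2 + 1 / (4 * t ^ 2))) t := by
  refine ((((hasDerivAt_pow 2 t).fun_neg).exp).fun_div
    ((hasDerivAt_id' t).const_mul 4) (mul_ne_zero four_ne_zero ht)).fun_neg.congr_deriv ?_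
  field_simp
  ring

lemma tendsto_neg_exp_neg_sq_div_atTop :
    Tendsto (fun s : ℝ => -(exp (-s ^ 2) / (4 * s))) atTop (𝓝 0) := by
  have hexp : Tendsto (fun s : ℝ => exp (-s ^ 2)) atTop (𝓝 0) :=
    tendsto_exp_atBot.comp (tendsto_neg_atTop_atBot.comp (tendsto_pow_atTop two_ne_zero))
  have hinv : Tendsto (fun s : ℝ => (4 * s)⁻¹) atTop (𝓝 0) :=
    tendsto_inv_atTop_zero.comp (tendsto_id.const_mul_atTop four_pos)
  simpa [div_eq_mul_inv] using (hexp.mul hinv).neg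

lemma exp_neg_sq_div_le_integral_Ioi {u : ℝ} (hu : 0 < u) (hu2 : 1 ≤ 2 * u ^ 2) :
    exp (-u ^ 2) / (4 * u) ≤ ∫ t in Ioi u, exp (-t ^ 2) := by
  have hderiv : ∀ t ∈ Ici u, HasDerivAt (fun s => -(exp (-s ^ 2) / (4 * s)))
      (exp (-t ^ 2) * (1 / 2 + 1 / (4 * t ^ 2))) t :=
    fun t ht => hasDerivAt_neg_exp_neg_sq_div (hu.trans_le ht).ne'
  have hint := integral_Ioi_of_hasDerivAt_of_nonneg' hderiv
    (fun t _ => by positivity) tendsto_neg_exp_neg_sq_div_atTop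
  rw [zero_sub, neg_neg] at hint
  rw [← hint]
  refine integral_mono_of_nonneg (.of_forall fun t => by positivity)
    integrable_exp_neg_sq.integrableOn ?_
  filter_upwards [ae_restrict_mem measurableSet_Ioi] with t ht
  have ht0 : 0 < t := hu.trans ht
  have hfactor : 1 / 2 + 1 / (4 * t ^ 2) ≤ 1 := by
    rw [div_add_div _ _ two_ne_zero (by positivity), div_le_one (by positivity)]
    nlinarith [mul_lt_mul ht ht.le hu ht0.le]
  exact mul_le_of_le_one_right (exp_pos _).le hfactor

theorem stmt_1 : ∀ u : ℝ, 1 / Real.sqrt 2 < u → f u ≤ 1 - 1 / (2 * u * Real.sqrt Real.pi) := by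
  intro u hu
  have hu0 : 0 < u := lt_trans (by positivity) hu
  have hu2 : 1 ≤ 2 * u ^ 2 := by
    have := pow_lt_pow_left₀ hu (by positivity) two_ne_zero
    rw [div_pow, sq_sqrt zero_le_two] at this
    linarith
  have htail := exp_neg_sq_div_le_integral_Ioi hu0 hu2
  have hexp : exp (-u ^ 2) ≤ 1 := exp_le_one_iff.2 (by nlinarith)
  have hπ : 0 < √π := sqrt_pos.2 pi_pos
  rw [f, erf_eq_one_sub_integral_Ioi]
  set T := ∫ t in Ioi u, exp (-t ^ 2)
  rw [div_le_iff₀ (by positivity)] at htail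
  rw [← sub_nonneg]
  have hgap : 1 - 1 / (2 * u * √π) - (1 - 2 / √π * T - (1 - exp (-u ^ 2)) / (u * √π))
      = (4 * u * T - exp (-u ^ 2) + (1 - exp (-u ^ 2))) / (2 * u * √π) := by
    field_simp
    ring
  rw [hgap]
  exact div_nonneg (by linarith) (by positivity)
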